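/- Let C ⊆ F^n be an 𝔽_q-linear additive conjucyclic code and D = Ψ(C). Then Ψ(C^{⊥_a}) = D^{⊥_s}, equivalently C^{⊥_a} = Ψ^{-1}(D^{⊥_s}). -/
import Mathlib


/-- The map `Ψ : F^n → K^{2n}`,
`Ψ(α₀,…,α_{n−1}) = (Tr(βα₀),…,Tr(βα_{n−1}), Tr(β̄α₀),…,Tr(β̄α_{n−1}))`, where `β̄ = β^q`. -/
def Psi (q n : ℕ) {K F : Type*} [Field K] [Field F] (Tr : F → K) (β : F)
    (α : Fin n → F) : Fin (2 * n) → K :=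
  fun i =>
    if h : (i : ℕ) < n then Tr (β * α ⟨(i : ℕ), h⟩)
    else Tr (β ^ q * α ⟨(i : ℕ) - n, by have := i.isLt; omega⟩)

/-- The conjucyclic shift `T : F^n → F^n`, `T(c₀,…,c_{n−1}) = (c̄_{n−1}, c₀,…,c_{n−2})`
with `c̄ = c^q`. -/
def Tshift (q n : ℕ) {F : Type*} [Field F] (c : Fin n → F) : Fin n → F :=
  fun i =>
    if _h : (i : ℕ) = 0 then (c ⟨n - 1, by have := i.isLt; omega⟩) ^ q
    else c ⟨(i : ℕ) - 1, by have := i.isLt; omega⟩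

/-- The alternating inner product on `F^n`:
`⟨u,v⟩_a = (β̄² − β²) Σ_{i=0}^{n−1} (u_i v̄_i − ū_i v_i)`, where `x̄ = x^q`. -/
def altInner (q n : ℕ) {F : Type*} [Field F] (β : F) (u v : Fin n → F) : F :=
  ((β ^ q) ^ 2 - β ^ 2) * ∑ i : Fin n, (u i * (v i) ^ q - (u i) ^ q * v i)

/-- The symplectic inner product on `K^{2n}`:
`⟨u,v⟩_s = Σ_{i=0}^{n−1} (u_i v_{n+i} − u_{n+i} v_i)`. -/
def sympInner (n : ℕ) {K : Type*} [Field K] (u v : Fin (2 * n) → K) : K :=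
  ∑ i : Fin n,
    (u ⟨(i : ℕ), by have := i.isLt; omega⟩ * v ⟨n + (i : ℕ), by have := i.isLt; omega⟩ -
     u ⟨n + (i : ℕ), by have := i.isLt; omega⟩ * v ⟨(i : ℕ), by have := i.isLt; omega⟩)

lemma Psi_lo (q n : ℕ) {K F : Type*} [Field K] [Field F] (Tr : F → K) (β : F)
    (w : Fin n → F) (i : Fin n) :
    Psi q n Tr β w ⟨(i : ℕ), by have := i.isLt; omega⟩ = Tr (β * w i) := by
  simp [Psi, i.isLt]

lemma Psi_hi (q n : ℕ) {K F : Type*} [Field K] [Field F] (Tr : F → K) (β : F)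
    (w : Fin n → F) (i : Fin n) :
    Psi q n Tr β w ⟨n + (i : ℕ), by have := i.isLt; omega⟩ = Tr (β ^ q * w i) := by
  simp [Psi]

/-- Let `C ⊆ F^n` be an `𝔽_q`-linear additive conjucyclic code and
`D = Ψ(C)`.  Then `Ψ(C^{⊥_a}) = D^{⊥_s}`, equivalently `C^{⊥_a} = Ψ⁻¹(D^{⊥_s})`. -/
theorem stmt8 (q n : ℕ) (hn : 0 < n) {K F : Type*} [Field K] [Fintype K] [Field F] [Fintype F]
    [Algebra K F] (hK : Fintype.card K = q) (hF : Fintype.card F = q ^ 2)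
    (β : F) (hβ : ∀ x : F, x ≠ 0 → ∃ k : ℕ, x = β ^ k)
    (Tr : F → K) (hTr : ∀ x : F, algebraMap K F (Tr x) = x + x ^ q)
    (C : Submodule K (Fin n → F)) (hC : ∀ c ∈ C, Tshift q n c ∈ C) :
    Psi q n Tr β '' {v : Fin n → F | ∀ u ∈ C, altInner q n β u v = 0} =
      {w : Fin (2 * n) → K |
        ∀ u ∈ Psi q n Tr β '' (C : Set (Fin n → F)), sympInner n u w = 0} ∧
    {v : Fin n → F | ∀ u ∈ C, altInner q n β u v = 0} =
      Psi q n Tr β ⁻¹' {w : Fin (2 * n) → K |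
        ∀ u ∈ Psi q n Tr β '' (C : Set (Fin n → F)), sympInner n u w = 0} := by
  classical
  have hq : 1 < q := hK ▸ Fintype.one_lt_card
  have hinj : Function.Injective (algebraMap K F) := (algebraMap K F).injective
  have hb2 : (β ^ q) ^ q = β := by
    rw [← pow_mul, ← pow_two, ← hF, FiniteField.pow_card]
  -- key identity
  have key : ∀ u v : Fin n → F,
      algebraMap K F (sympInner n (Psi q n Tr β u) (Psi q n Tr β v)) = - altInner q n β u v := by
    intro u v
    unfold sympInner altInner
    rw [map_sum, Finset.mul_sum, ← Finset.sum_neg_distrib]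
    refine Finset.sum_congr rfl fun i _ => ?_
    rw [map_sub, map_mul, map_mul, Psi_lo, Psi_lo, Psi_hi, Psi_hi, hTr, hTr, hTr, hTr]
    simp only [mul_pow, hb2]
    ring
  -- β is nonzero
  have hβ0 : β ≠ 0 := by
    classical
    intro h0
    have hsub : (Finset.univ : Finset F) ⊆ {0, 1} := by
      intro x _
      rcases eq_or_ne x 0 with hx | hx
      · simp [hx]
      · obtain ⟨k, hk⟩ := hβ x hx
        rcases Nat.eq_zero_or_pos k with hk0 | hk0
        · simp [hk, hk0]
        · exfalso; exact hx (by simp [hk, h0, zero_pow hk0.ne'])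
    have h1 := Finset.card_le_card hsub
    have h2 : ({0, 1} : Finset F).card ≤ 2 :=
      (Finset.card_insert_le _ _).trans (by simp)
    rw [Finset.card_univ, hF] at h1
    have h3 : q ^ 2 ≤ 2 := h1.trans h2
    have h4 : 2 * 2 ≤ q * q := Nat.mul_le_mul hq hq
    rw [pow_two] at h3
    omega
  -- order of β
  have hne : β ^ 2 ≠ (β ^ q) ^ 2 := by
    intro h
    set b : Fˣ := Units.mk0 β hβ0 with hb
    have hmem : ∀ x : Fˣ, x ∈ Subgroup.zpowers b := by
      intro x
      obtain ⟨k, hk⟩ := hβ x.val x.ne_zero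
      exact ⟨(k : ℤ), by ext; simp [hb, ← hk]⟩
    have hord : orderOf b = Nat.card Fˣ := orderOf_eq_card_of_forall_mem_zpowers hmem
    have hcardu : Nat.card Fˣ = q ^ 2 - 1 := by
      rw [Nat.card_eq_fintype_card, Fintype.card_units, hF]
    have hm : β ^ (2 * q - 2) = 1 := by
      have h2q : 2 + (2 * q - 2) = 2 * q := by omega
      have : β ^ 2 * β ^ (2 * q - 2) = β ^ 2 * 1 := by
        rw [← pow_add, h2q, mul_one, h, ← pow_mul, mul_comm 2 q]
      exact mul_left_cancel₀ (pow_ne_zero 2 hβ0) this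
    have hbm : b ^ (2 * q - 2) = 1 := by ext; simp [hb, hm]
    have hdvd : orderOf b ∣ 2 * q - 2 := orderOf_dvd_of_pow_eq_one hbm
    rw [hord, hcardu] at hdvd
    have hle : q ^ 2 - 1 ≤ 2 * q - 2 := Nat.le_of_dvd (by omega) hdvd
    have : 2 * q ≤ q * q := Nat.mul_le_mul_right q hq
    rw [pow_two] at hle
    omega
  have hd : β ^ 2 - (β ^ q) ^ 2 ≠ 0 := sub_ne_zero.mpr hne
  -- Psi is injective
  have hinjΨ : Function.Injective (Psi q n Tr β) := by
    intro a b hab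
    funext i
    have e1 := congrArg (algebraMap K F) (congrFun hab ⟨(i : ℕ), by have := i.isLt; omega⟩)
    have e2 := congrArg (algebraMap K F) (congrFun hab ⟨n + (i : ℕ), by have := i.isLt; omega⟩)
    rw [Psi_lo, Psi_lo, hTr, hTr] at e1
    rw [Psi_hi, Psi_hi, hTr, hTr] at e2
    simp only [mul_pow, hb2] at e1 e2
    apply mul_left_cancel₀ hd
    linear_combination β * e1 - β ^ q * e2
  -- Psi is surjective
  have hcard : Fintype.card (Fin n → F) = Fintype.card (Fin (2 * n) → K) := by
    rw [Fintype.card_fun, Fintype.card_fun, hF, hK, Fintype.card_fin, Fintype.card_fin,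
      ← pow_mul]
  have hsurj : Function.Surjective (Psi q n Tr β) :=
    ((Fintype.bijective_iff_injective_and_card _).mpr ⟨hinjΨ, hcard⟩).surjective
  -- equivalence
  have equiv : ∀ v : Fin n → F,
      (∀ u ∈ C, altInner q n β u v = 0) ↔
      (∀ u ∈ Psi q n Tr β '' (C : Set (Fin n → F)), sympInner n u (Psi q n Tr β v) = 0) := by
    intro v
    constructor
    · rintro hv u ⟨c, hc, rfl⟩
      apply hinj
      rw [map_zero, key, hv c hc, neg_zero]
    · intro hw c hc
      have h0 := hw (Psi q n Tr β c) ⟨c, hc, rfl⟩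
      have := key c v
      rw [h0, map_zero] at this
      exact neg_eq_zero.mp this.symm
  constructor
  · ext w
    constructor
    · rintro ⟨v, hv, rfl⟩
      exact (equiv v).mp hv
    · intro hw
      obtain ⟨v, rfl⟩ := hsurj w
      exact ⟨v, (equiv v).mpr hw, rfl⟩
  · ext v
    exact equiv v
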